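/- (Fixed point characterizes reachability) Assume Q is a stateless effect summary of P, i.e., Q is stateless and Effects(T ∥ Q*) ⊆ Effects(Q*) for all threads T ∈ P. Let X be the least fixed point of X_0 = {(s_init, (T, emp)) : T ∈ P}, X_{i+1} = X_i ∪ post(X_i) ∪ env(X_i), where post applies one sequential step of the tracked thread and env replaces the shared heap s of a view (s, cf) by any s' obtainable by a single Q-step (s, cf_init(Q)) → (s', cf') such that (s', cf) is separated. Then the set of shared heaps occurring in X equals the union over T ∈ P of Reach(T ∥ Q*). -/

import Mathlib

namespace Paper

/-- Threads of the core language. -/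
inductive Thread (C : Type) : Type where
  | prim : C → Thread C
  | skip : Thread C
  | seq : Thread C → Thread C → Thread C
  | choice : Thread C → Thread C → Thread C
  | star : Thread C → Thread C
  | atomic : Thread C → Thread C

/-- Heaps: partial maps from variables and addresses to naturals. -/
abbrev Heap := (String ⊕ ℕ) → Option ℕ

def emp : Heap := fun _ => none

/-- Memory-cell (address) part of the domain of a heap. -/
def addrDom (h : Heap) : Set ℕ := {a | h (Sum.inr a) ≠ none}

/-- Disjointness on memory cells. -/
def Disj (h₁ h₂ : Heap) : Prop := addrDom h₁ ∩ addrDom h₂ = ∅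

abbrev Config (C : Type) := Thread C × Heap

/-- Thread-configuration maps (partial over thread identifiers). -/
abbrev Cf (C : Type) := ℕ → Option (Config C)

/-- A state (s, cf) is separated. -/
def Separated {C : Type} (s : Heap) (cf : Cf C) : Prop :=
  (∀ i c, cf i = some c → Disj s c.2) ∧
  (∀ i j ci cj, i ≠ j → cf i = some ci → cf j = some cj → Disj ci.2 cj.2)

variable {C : Type}

mutual
  /-- Sequential small-step semantics, parameterized by the semantics `prim`
  of primitive commands (relating shared/owned heaps before and after). -/
  inductive SeqStep (prim : C → Heap → Heap → Heap → Heap → Prop) :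
      Heap → Config C → Heap → Config C → Prop where
    | primStep {c s o s' o'} : prim c s o s' o' →
        SeqStep prim s (Thread.prim c, o) s' (Thread.skip, o')
    | seqL {s T₁ o s' T₁' o'} (T₂ : Thread C) :
        SeqStep prim s (T₁, o) s' (T₁', o') →
        SeqStep prim s (Thread.seq T₁ T₂, o) s' (Thread.seq T₁' T₂, o')
    | seqSkip {s o} (T : Thread C) :
        SeqStep prim s (Thread.seq Thread.skip T, o) s (T, o)
    | choiceL {s T₁ o s' T₁' o'} (T₂ : Thread C) :
        SeqStep prim s (T₁, o) s' (T₁', o') →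
        SeqStep prim s (Thread.choice T₁ T₂, o) s' (T₁', o')
    | choiceR {s T₂ o s' T₂' o'} (T₁ : Thread C) :
        SeqStep prim s (T₂, o) s' (T₂', o') →
        SeqStep prim s (Thread.choice T₁ T₂, o) s' (T₂', o')
    | starUnfold {s o} (T : Thread C) :
        SeqStep prim s (Thread.star T, o) s (Thread.seq T (Thread.star T), o)
    | starExit {s o} (T : Thread C) :
        SeqStep prim s (Thread.star T, o) s (Thread.skip, o)
    | atomic {s T o s' o'} :
        SeqSteps prim s (T, o) s' (Thread.skip, o') →
        SeqStep prim s (Thread.atomic T, o) s' (Thread.skip, o')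

  /-- Finitely many sequential steps. -/
  inductive SeqSteps (prim : C → Heap → Heap → Heap → Heap → Prop) :
      Heap → Config C → Heap → Config C → Prop where
    | refl {s c} : SeqSteps prim s c s c
    | step {s c s' c' s'' c''} : SeqStep prim s c s' c' →
        SeqSteps prim s' c' s'' c'' → SeqSteps prim s c s'' c''
end

variable (prim : C → Heap → Heap → Heap → Heap → Prop)

/-- Parallel (program) step: one thread steps sequentially and the
resulting state must be separated. -/
def ParStep (st st' : Heap × Cf C) : Prop :=
  ∃ i c c', st.2 i = some c ∧ SeqStep prim st.1 c st'.1 c' ∧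
    st'.2 = Function.update st.2 i (some c') ∧ Separated st'.1 st'.2

def ParSteps : Heap × Cf C → Heap × Cf C → Prop :=
  Relation.ReflTransGen (ParStep prim)

/-- A program is a parallel composition of finitely many threads. -/
abbrev Program (C : Type) := List (Thread C)

/-- `Q*` : Kleene star applied to every thread. -/
def starP (P : Program C) : Program C := P.map Thread.star

/-- Initial thread configurations: each thread with the empty owned heap. -/
def cfInit (P : Program C) : Cf C := fun i => (P[i]?).map fun T => (T, emp)

/-- Reachable shared heaps of a program from initial shared heap `sinit`. -/
def Reach (sinit : Heap) (P : Program C) : Set Heap :=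
  {s | ∃ cf, ParSteps prim (sinit, cfInit P) (s, cf)}

/-- Effects: single-step shared-heap updates along executions. -/
def Effects (sinit : Heap) (P : Program C) : Set (Heap × Heap) :=
  {p | ∃ cf cf', ParSteps prim (sinit, cfInit P) (p.1, cf) ∧
       ParStep prim (p.1, cf) (p.2, cf')}

/-- Statelessness: every thread of `Q`, from any shared heap reachable by `Q*`
with empty owned heap, steps in one step to `(skip, emp)`. -/
def Stateless (sinit : Heap) (Q : Program C) : Prop :=
  ∀ T ∈ Q, ∀ s ∈ Reach prim sinit (starP Q), ∀ s' c,
    SeqStep prim s (T, emp) s' c → c = (Thread.skip, emp)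

/-- Assumption 1: sequential steps preserve separation. -/
def PreservesSep : Prop :=
  ∀ s c s' c', SeqStep prim s c s' c' → Disj s c.2 → Disj s' c'.2

/-- `Q` is a stateless effect summary of `P`. -/
def IsSummary (sinit : Heap) (P Q : Program C) : Prop :=
  Stateless prim sinit Q ∧
  ∀ T ∈ P, Effects prim sinit (T :: starP Q) ⊆ Effects prim sinit (starP Q)

/-- Sequential-step successors of a set of views. -/
def post (X : Set (Heap × Config C)) : Set (Heap × Config C) :=
  {v' | ∃ v ∈ X, SeqStep prim v.1 v.2 v'.1 v'.2}

/-- Interference successors: replace the shared heap of a view by the result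
of one step of the summary `Q` from its initial configuration, subject to
separation of the resulting view. -/
def env (Q : Program C) (X : Set (Heap × Config C)) : Set (Heap × Config C) :=
  {v' | Disj v'.1 v'.2.2 ∧ ∃ s cf', (s, v'.2) ∈ X ∧
        ParStep prim (s, cfInit Q) (v'.1, cf')}

/-- Initial views. -/
def X₀ (sinit : Heap) (P : Program C) : Set (Heap × Config C) :=
  {v | v.1 = sinit ∧ ∃ T ∈ P, v.2 = (T, emp)}

/-- The least fixed point of the thread-modular analysis with interference
computed by the candidate summary `Q`. -/
def Fix (sinit : Heap) (P Q : Program C) : Set (Heap × Config C) :=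
  ⋂₀ {X | X₀ sinit P ⊆ X ∧ post prim X ⊆ X ∧ env prim Q X ⊆ X}

/-- Shared heaps occurring in the fixed point. -/
def FixHeaps (sinit : Heap) (P Q : Program C) : Set Heap :=
  {s | ∃ c, (s, c) ∈ Fix prim sinit P Q}
/-! A view of the fixed point is realised by an execution of `T ∥ Q*` in which every thread of
`Q*` sits at its initial configuration `(Tᵢ*, emp)`: an interference step of the analysis is
replayed by unfolding `Tᵢ*`, running `Tᵢ` and returning to `Tᵢ*`. Conversely, along an execution
of `T ∥ Q*` the tracked view stays in the fixed point. By the effect-summary property every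
shared heap reached there is reachable by `Q*`, so statelessness makes each body `Tᵢ` finish in
its first step; a step of a thread of `Q*` is therefore either silent or a single `Q`-step from
`cf_init(Q)`, i.e. an interference step of the analysis. -/

section Separation

lemma disj_emp_right (h : Heap) : Disj h emp := by
  simp [Disj, addrDom, emp]

lemma disj_emp_left (h : Heap) : Disj emp h := by
  simp [Disj, addrDom, emp]

lemma separated_of_forall_ne_eq_emp {s : Heap} {cf : Cf C} (k : ℕ)
    (hk : ∀ c, cf k = some c → Disj s c.2)
    (hemp : ∀ i ≠ k, ∀ c, cf i = some c → c.2 = emp) : Separated s cf := by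
  refine ⟨fun i c hc => ?_, fun i j ci cj hij hi hj => ?_⟩
  · by_cases hik : i = k
    · subst hik; exact hk c hc
    · rw [hemp i hik c hc]; exact disj_emp_right s
  · by_cases hik : i = k
    · subst hik; rw [hemp j (Ne.symm hij) cj hj]; exact disj_emp_right _
    · rw [hemp i hik ci hi]; exact disj_emp_left _

lemma Separated.update_emp {s : Heap} {cf : Cf C} (hsep : Separated s cf) (k : ℕ)
    (t : Thread C) : Separated s (Function.update cf k (some (t, emp))) := by
  refine ⟨fun i c hc => ?_, fun i j ci cj hij hi hj => ?_⟩
  · by_cases hik : i = k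
    · subst hik; rw [Function.update_self] at hc; cases hc
      exact disj_emp_right s
    · exact hsep.1 i c (by rwa [Function.update_of_ne hik] at hc)
  · by_cases hik : i = k
    · subst hik; rw [Function.update_self] at hi; cases hi
      exact disj_emp_left _
    by_cases hjk : j = k
    · subst hjk; rw [Function.update_self] at hj; cases hj
      exact disj_emp_right _
    rw [Function.update_of_ne hik] at hi
    rw [Function.update_of_ne hjk] at hj
    exact hsep.2 i j ci cj hij hi hj

end Separation

section InitialConfigurations

lemma cfInit_eq_some {L : Program C} {i : ℕ} {c : Config C} :
    cfInit L i = some c ↔ ∃ T, L[i]? = some T ∧ c = (T, emp) := by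
  simp [cfInit, eq_comm]

lemma cfInit_cons_zero (T : Thread C) (L : Program C) : cfInit (T :: L) 0 = some (T, emp) := by
  simp [cfInit]

lemma cfInit_cons_succ (T : Thread C) (L : Program C) (i : ℕ) :
    cfInit (T :: L) (i + 1) = cfInit L i := by
  simp [cfInit]

lemma cfInit_starP (Q : Program C) (i : ℕ) :
    cfInit (starP Q) i = (Q[i]?).map fun T => (Thread.star T, emp) := by
  simp [cfInit, starP, Option.map_map, Function.comp_def]

lemma separated_update_cfInit {s : Heap} (L : Program C) (k : ℕ) {c : Config C}
    (hc : Disj s c.2) : Separated s (Function.update (cfInit L) k (some c)) := by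
  refine separated_of_forall_ne_eq_emp k (fun c' h => ?_) (fun i hik c' h => ?_)
  · rw [Function.update_self] at h; cases h; exact hc
  · rw [Function.update_of_ne hik, cfInit_eq_some] at h
    obtain ⟨T, -, rfl⟩ := h
    rfl

lemma separated_cfInit (s : Heap) (L : Program C) : Separated s (cfInit L) :=
  separated_of_forall_ne_eq_emp 0 (fun c h => by
    obtain ⟨T, -, rfl⟩ := cfInit_eq_some.1 h; exact disj_emp_right s)
    (fun i _ c h => by obtain ⟨T, -, rfl⟩ := cfInit_eq_some.1 h; rfl)

end InitialConfigurations

section Steps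

variable {prim : C → Heap → Heap → Heap → Heap → Prop}

lemma parStep_update_emp {s s' : Heap} {cf : Cf C} {k : ℕ} {t t' : Thread C}
    (hk : cf k = some (t, emp)) (hstep : SeqStep prim s (t, emp) s' (t', emp))
    (hsep : Separated s' cf) :
    ParStep prim (s, cf) (s', Function.update cf k (some (t', emp))) :=
  ⟨k, _, _, hk, hstep, rfl, hsep.update_emp k t'⟩

lemma parSteps_star_round_trip {s s' : Heap} {cf : Cf C} {k : ℕ} {T : Thread C}
    (hk : cf k = some (Thread.star T, emp))
    (hstep : SeqStep prim s (T, emp) s' (Thread.skip, emp))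
    (hsep : Separated s cf) (hsep' : Separated s' cf) :
    ParSteps prim (s, cf) (s', cf) := by
  set cf₁ := Function.update cf k (some (Thread.seq T (Thread.star T), emp))
  set cf₂ := Function.update cf₁ k (some (Thread.seq Thread.skip (Thread.star T), emp))
  have unfold : ParStep prim (s, cf) (s, cf₁) :=
    parStep_update_emp hk (SeqStep.starUnfold T) hsep
  have run : ParStep prim (s, cf₁) (s', cf₂) :=
    parStep_update_emp (Function.update_self k _ cf) (SeqStep.seqL _ hstep) (hsep'.update_emp k _)
  have back : Function.update cf₂ k (some (Thread.star T, emp)) = cf := by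
    simp only [cf₂, cf₁, Function.update_idem, ← hk, Function.update_eq_self]
  have fold : ParStep prim (s', cf₂) (s', cf) := back ▸
    parStep_update_emp (Function.update_self k _ cf₁) (SeqStep.seqSkip (Thread.star T))
      ((hsep'.update_emp k _).update_emp k _)
  exact ((Relation.ReflTransGen.single unfold).tail run).tail fold

lemma reach_subset_of_effects_subset {sinit : Heap} {R R' : Program C}
    (h : Effects prim sinit R ⊆ Effects prim sinit R') :
    Reach prim sinit R ⊆ Reach prim sinit R' := by
  suffices ∀ st, ParSteps prim (sinit, cfInit R) st → st.1 ∈ Reach prim sinit R' from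
    fun s ⟨cf, hsteps⟩ => this (s, cf) hsteps
  intro st hsteps
  induction hsteps with
  | refl => exact ⟨_, Relation.ReflTransGen.refl⟩
  | @tail b c hsteps hstep _ =>
    obtain ⟨_, cf', hs', hstep'⟩ := h (a := (b.1, c.1)) ⟨b.2, c.2, hsteps, hstep⟩
    exact ⟨cf', hs'.tail hstep'⟩

lemma IsSummary.eq_skip_emp {sinit : Heap} {P Q : Program C} (hsum : IsSummary prim sinit P Q)
    {T : Thread C} (hT : T ∈ P) {s : Heap} (hs : s ∈ Reach prim sinit (T :: starP Q))
    {Tq : Thread C} (hTq : Tq ∈ Q) {s' : Heap} {c : Config C}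
    (hstep : SeqStep prim s (Tq, emp) s' c) : c = (Thread.skip, emp) :=
  hsum.1 Tq hTq s (reach_subset_of_effects_subset (hsum.2 T hT) hs) s' c hstep

end Steps

section FixedPoint

variable {prim : C → Heap → Heap → Heap → Heap → Prop} {sinit : Heap} {P Q : Program C}

lemma X₀_subset_Fix : X₀ sinit P ⊆ Fix prim sinit P Q :=
  fun _ hv _ hX => hX.1 hv

lemma post_Fix_subset : post prim (Fix prim sinit P Q) ⊆ Fix prim sinit P Q := by
  rintro v ⟨w, hw, hstep⟩ X hX
  exact hX.2.1 ⟨w, hw X hX, hstep⟩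

lemma env_Fix_subset : env prim Q (Fix prim sinit P Q) ⊆ Fix prim sinit P Q := by
  rintro v ⟨hd, s, cf', hw, hstep⟩ X hX
  exact hX.2.2 ⟨hd, s, cf', hw X hX, hstep⟩

lemma Fix_subset {X : Set (Heap × Config C)}
    (h₀ : X₀ sinit P ⊆ X) (hpost : post prim X ⊆ X) (henv : env prim Q X ⊆ X) :
    Fix prim sinit P Q ⊆ X :=
  fun _ hv => hv X ⟨h₀, hpost, henv⟩

end FixedPoint

section Soundness

variable {prim : C → Heap → Heap → Heap → Heap → Prop} {sinit : Heap} {P Q : Program C}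

variable (prim sinit P Q) in
/-- Views `(s, c)` reached by `T ∥ Q*` in a state whose `Q*`-threads are all back at
`cf_init(Q*)`. -/
def Realizable : Set (Heap × Config C) :=
  {v | Disj v.1 v.2.2 ∧ ∃ T ∈ P,
    ParSteps prim (sinit, cfInit (T :: starP Q))
      (v.1, Function.update (cfInit (T :: starP Q)) 0 (some v.2))}

lemma X₀_subset_realizable : X₀ sinit P ⊆ Realizable prim sinit P Q := by
  rintro ⟨s, c⟩ ⟨rfl, T, hT, rfl⟩
  refine ⟨disj_emp_right _, T, hT, ?_⟩
  rw [Function.update_eq_self_iff.2 (cfInit_cons_zero T (starP Q))]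
  exact Relation.ReflTransGen.refl

lemma post_realizable_subset (hps : PreservesSep prim) :
    post prim (Realizable prim sinit P Q) ⊆ Realizable prim sinit P Q := by
  rintro ⟨s', c'⟩ ⟨⟨s, c⟩, ⟨hd, T, hT, hsteps⟩, hstep⟩
  have hd' : Disj s' c'.2 := hps s c s' c' hstep hd
  refine ⟨hd', T, hT, hsteps.tail ⟨0, c, c', by simp, hstep, ?_, ?_⟩⟩
  · exact (Function.update_idem ..).symm
  · exact separated_update_cfInit _ 0 hd'

lemma env_realizable_subset (hsum : IsSummary prim sinit P Q) :
    env prim Q (Realizable prim sinit P Q) ⊆ Realizable prim sinit P Q := by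
  rintro ⟨s', c⟩ ⟨hd', s, _, ⟨hd, T, hT, hsteps⟩, j, cq, cq', hj, hstep, -⟩
  obtain ⟨Tq, hQ, rfl⟩ := cfInit_eq_some.1 hj
  have hskip := hsum.eq_skip_emp hT ⟨_, hsteps⟩ (List.mem_of_getElem? hQ) hstep
  subst hskip
  have hk : Function.update (cfInit (T :: starP Q)) 0 (some c) (j + 1) =
      some (Thread.star Tq, emp) := by
    rw [Function.update_of_ne (Nat.succ_ne_zero j), cfInit_cons_succ, cfInit_starP, hQ]
    rfl
  exact ⟨hd', T, hT, hsteps.trans (parSteps_star_round_trip hk hstep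
    (separated_update_cfInit _ 0 hd) (separated_update_cfInit _ 0 hd'))⟩

lemma Fix_subset_realizable (hps : PreservesSep prim) (hsum : IsSummary prim sinit P Q) :
    Fix prim sinit P Q ⊆ Realizable prim sinit P Q :=
  Fix_subset X₀_subset_realizable (post_realizable_subset hps) (env_realizable_subset hsum)

end Soundness

section Completeness

variable {prim : C → Heap → Heap → Heap → Heap → Prop} {sinit : Heap} {P Q : Program C}

/-- The configurations of a thread `T*` of `Q*` when `T` always finishes in its first step,
which is what statelessness guarantees along executions of `T' ∥ Q*`. -/
inductive StarConfig (T : Thread C) : Config C → Prop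
  | star : StarConfig T (Thread.star T, emp)
  | unfolded : StarConfig T (Thread.seq T (Thread.star T), emp)
  | done : StarConfig T (Thread.seq Thread.skip (Thread.star T), emp)
  | exit : StarConfig T (Thread.skip, emp)

lemma StarConfig.seqStep {T : Thread C} {s s' : Heap} {c c' : Config C} (hc : StarConfig T c)
    (hT : ∀ s' c', SeqStep prim s (T, emp) s' c' → c' = (Thread.skip, emp))
    (hstep : SeqStep prim s c s' c') :
    StarConfig T c' ∧ (s' = s ∨ SeqStep prim s (T, emp) s' (Thread.skip, emp)) := by
  cases hc with
  | star => cases hstep <;> exact ⟨by constructor, .inl rfl⟩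
  | unfolded =>
    cases hstep with
    | seqL _ hbody =>
      cases hT _ _ hbody
      exact ⟨.done, .inr hbody⟩
    | seqSkip => exact ⟨.star, .inl rfl⟩
  | done =>
    cases hstep with
    | seqL _ hbody => cases hbody
    | seqSkip => exact ⟨.star, .inl rfl⟩
  | exit => cases hstep

variable (Q) in
def EnvShaped (cf : Cf C) : Prop :=
  ∀ i c, cf (i + 1) = some c → ∃ T, Q[i]? = some T ∧ StarConfig T c

lemma envShaped_cfInit (T : Thread C) : EnvShaped Q (cfInit (T :: starP Q)) := by
  intro i c hc
  rw [cfInit_cons_succ, cfInit_starP] at hc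
  obtain ⟨Tq, hQ, rfl⟩ := Option.map_eq_some_iff.1 hc
  exact ⟨Tq, hQ, .star⟩

lemma EnvShaped.update_zero {cf : Cf C} (h : EnvShaped Q cf) (c : Option (Config C)) :
    EnvShaped Q (Function.update cf 0 c) := fun i c' hc =>
  h i c' (by rwa [Function.update_of_ne (Nat.succ_ne_zero i)] at hc)

lemma EnvShaped.update_succ {cf : Cf C} (h : EnvShaped Q cf) {j : ℕ} {T : Thread C}
    (hQ : Q[j]? = some T) {c : Config C} (hc : StarConfig T c) :
    EnvShaped Q (Function.update cf (j + 1) (some c)) := by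
  intro i c' hc'
  by_cases hij : i = j
  · subst hij
    rw [Function.update_self] at hc'
    cases hc'
    exact ⟨T, hQ, hc⟩
  · exact h i c' (by rwa [Function.update_of_ne (by omega)] at hc')

variable (prim sinit P Q) in
def Covered (st : Heap × Cf C) : Prop :=
  (∃ c, st.2 0 = some c ∧ (st.1, c) ∈ Fix prim sinit P Q) ∧ EnvShaped Q st.2

lemma covered_init {T : Thread C} (hT : T ∈ P) :
    Covered prim sinit P Q (sinit, cfInit (T :: starP Q)) :=
  ⟨⟨_, cfInit_cons_zero T (starP Q), X₀_subset_Fix ⟨rfl, T, hT, rfl⟩⟩, envShaped_cfInit T⟩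

lemma Covered.parStep {st st' : Heap × Cf C} (hcov : Covered prim sinit P Q st)
    (hQ : ∀ T ∈ Q, ∀ s' c, SeqStep prim st.1 (T, emp) s' c → c = (Thread.skip, emp))
    (hstep : ParStep prim st st') : Covered prim sinit P Q st' := by
  obtain ⟨s, cf⟩ := st
  obtain ⟨s', cf'⟩ := st'
  obtain ⟨⟨c₀, hc₀, hfix⟩, hshaped⟩ := hcov
  obtain ⟨i, c, c', hc, hseq, rfl, hsep⟩ := hstep
  dsimp only at hc₀ hfix hshaped hQ hc hseq hsep ⊢
  cases i with
  | zero =>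
    cases hc₀.symm.trans hc
    exact ⟨⟨c', by simp, post_Fix_subset ⟨_, hfix, hseq⟩⟩,
      hshaped.update_zero _⟩
  | succ j =>
    obtain ⟨Tq, hTq, hconf⟩ := hshaped j c hc
    have hc₀' : Function.update cf (j + 1) (some c') 0 = some c₀ := by
      rwa [Function.update_of_ne (Nat.succ_ne_zero j).symm]
    obtain ⟨hconf', rfl | hbody⟩ :=
      hconf.seqStep (hQ Tq (List.mem_of_getElem? hTq)) hseq
    · exact ⟨⟨c₀, hc₀', hfix⟩, hshaped.update_succ hTq hconf'⟩
    · have hinit : cfInit Q j = some (Tq, emp) := by simp [cfInit, hTq]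
      refine ⟨⟨c₀, hc₀', env_Fix_subset
        ⟨hsep.1 0 c₀ hc₀', s, Function.update (cfInit Q) j (some (Thread.skip, emp)), hfix, ?_⟩⟩,
        hshaped.update_succ hTq hconf'⟩
      exact parStep_update_emp hinit hbody (separated_cfInit s' Q)

lemma covered_of_parSteps (hsum : IsSummary prim sinit P Q) {T : Thread C} (hT : T ∈ P)
    {st : Heap × Cf C} (h : ParSteps prim (sinit, cfInit (T :: starP Q)) st) :
    Covered prim sinit P Q st := by
  induction h with
  | refl => exact covered_init hT
  | @tail b _ hsteps hstep hcov =>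
    exact hcov.parStep (fun _ hTq _ _ => hsum.eq_skip_emp hT ⟨b.2, hsteps⟩ hTq) hstep

end Completeness

/-- Fixed point characterizes reachability. -/
theorem fixed_point_reachset
    (hps : PreservesSep prim)
    (sinit : Heap) (P Q : Program C)
    (hsum : IsSummary prim sinit P Q) :
    FixHeaps prim sinit P Q =
      {s | ∃ T ∈ P, s ∈ Reach prim sinit (T :: starP Q)} := by
  ext s
  constructor
  · rintro ⟨c, hfix⟩
    obtain ⟨-, T, hT, hsteps⟩ := Fix_subset_realizable hps hsum hfix
    exact ⟨T, hT, _, hsteps⟩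
  · rintro ⟨T, hT, cf, hsteps⟩
    obtain ⟨⟨c, -, hfix⟩, -⟩ := covered_of_parSteps hsum hT hsteps
    exact ⟨c, hfix⟩

end Paper
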